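/- Let 0<q₁<1, let β>0, μ>0 and η>−1 be real parameters, let f,g,h : [0,∞)→ℝ be continuous pairwise synchronous functions on [0,∞) with h nonnegative, and let u : [0,∞)→[0,∞) be continuous. Then for all t>0 and all ρ ≥ 0: I_{q₁}^{η,μ,β}{u·f·g·h}(t) + h(ρ)·I_{q₁}^{η,μ,β}{u·f·g}(t) + f(ρ)g(ρ)·I_{q₁}^{η,μ,β}{u·h}(t) + f(ρ)g(ρ)h(ρ)·I_{q₁}^{η,μ,β}{u}(t) ≥ g(ρ)·I_{q₁}^{η,μ,β}{u·f·h}(t) + g(ρ)h(ρ)·I_{q₁}^{η,μ,β}{u·f}(t) + f(ρ)·I_{q₁}^{η,μ,β}{u·g·h}(t) + f(ρ)h(ρ)·I_{q₁}^{η,μ,β}{u·g}(t). -/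

import Mathlib

open scoped BigOperators

/-- The q-shifted factorial (a;q)_k = prod_{j<k} (1 - a q^j). -/
noncomputable def qPoch (q a : ℝ) (k : ℕ) : ℝ :=
  ∏ j ∈ Finset.range k, (1 - a * q ^ j)

/-- Generalized Erdélyi–Kober fractional q-integral
    I_q^{η,μ,β}{f}(t) = β(1-q^{1/β})(1-q)^{μ-1} ∑_k ((q^μ;q)_k/(q;q)_k) q^{k(η+1)} f(t q^{k/β}). -/
noncomputable def EK (q η μ β : ℝ) (f : ℝ → ℝ) (t : ℝ) : ℝ :=
  β * (1 - q ^ (1 / β)) * (1 - q) ^ (μ - 1) *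
    ∑' k : ℕ, qPoch q (q ^ μ) k / qPoch q q k * q ^ ((k : ℝ) * (η + 1)) * f (t * q ^ ((k : ℝ) / β))

def Synchronous (f g : ℝ → ℝ) : Prop :=
  ∀ x y : ℝ, 0 ≤ x → 0 ≤ y → 0 ≤ (f x - f y) * (g x - g y)

def Asynchronous (f g : ℝ → ℝ) : Prop :=
  ∀ x y : ℝ, 0 ≤ x → 0 ≤ y → (f x - f y) * (g x - g y) ≤ 0

open Set Filter Topology

/-! For `t ≥ 0` and `β > 0` the operator `I_q^{η,μ,β}` is a convergent series
`∑ wₖ v(t q^{k/β})` with nonnegative weights and nodes in `[0, t]`, i.e. a positive linear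
functional on functions continuous on `[0, ∞)`. The difference of the two sides of the inequality
is this functional applied to `u (f - f ρ) (g - g ρ) (h + h ρ)`, which is pointwise nonnegative
because `f, g` are synchronous and `u, h ≥ 0`. -/

lemma qPoch_pos {q a : ℝ} (hq0 : 0 ≤ q) (hq1 : q ≤ 1) (ha0 : 0 ≤ a) (ha1 : a < 1) (k : ℕ) :
    0 < qPoch q a k :=
  Finset.prod_pos fun j _ => by
    have : a * q ^ j ≤ a := mul_le_of_le_one_right ha0 (pow_le_one₀ hq0 hq1)
    linarith

lemma qPoch_succ (q a : ℝ) (k : ℕ) : qPoch q a (k + 1) = qPoch q a k * (1 - a * q ^ k) :=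
  Finset.prod_range_succ _ k

noncomputable def ekCoeff (q μ η : ℝ) (k : ℕ) : ℝ :=
  qPoch q (q ^ μ) k / qPoch q q k * q ^ ((k : ℝ) * (η + 1))

noncomputable def ekWeight (q η μ β : ℝ) (k : ℕ) : ℝ :=
  β * (1 - q ^ (1 / β)) * (1 - q) ^ (μ - 1) * ekCoeff q μ η k

section ErdelyiKober

variable {q μ η β : ℝ}

lemma ekCoeff_pos (hq : 0 < q) (hq1 : q < 1) (hμ : 0 < μ) (k : ℕ) : 0 < ekCoeff q μ η k :=
  mul_pos (div_pos (qPoch_pos hq.le hq1.le (Real.rpow_nonneg hq.le μ)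
      (Real.rpow_lt_one hq.le hq1 hμ) k) (qPoch_pos hq.le hq1.le hq.le hq1 k))
    (Real.rpow_pos_of_pos hq _)

lemma ekCoeff_succ (hq : 0 < q) (hq1 : q < 1) (hμ : 0 < μ) (k : ℕ) :
    ekCoeff q μ η (k + 1) =
      ekCoeff q μ η k * ((1 - q ^ μ * q ^ k) / (1 - q * q ^ k) * q ^ (η + 1)) := by
  have hpow : q ^ (((k + 1 : ℕ) : ℝ) * (η + 1)) = q ^ ((k : ℝ) * (η + 1)) * q ^ (η + 1) := by
    rw [← Real.rpow_add hq]
    push_cast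
    ring_nf
  have hA : qPoch q (q ^ μ) k ≠ 0 :=
    (qPoch_pos hq.le hq1.le (Real.rpow_nonneg hq.le μ) (Real.rpow_lt_one hq.le hq1 hμ) k).ne'
  have hB : qPoch q q k ≠ 0 := (qPoch_pos hq.le hq1.le hq.le hq1 k).ne'
  have hC : 1 - q * q ^ k ≠ 0 := by
    have : q * q ^ k < 1 := by rw [← pow_succ']; exact pow_lt_one₀ hq.le hq1 k.succ_ne_zero
    linarith
  simp only [ekCoeff, qPoch_succ, hpow]
  field_simp

lemma summable_ekCoeff (hq : 0 < q) (hq1 : q < 1) (hμ : 0 < μ) (hη : -1 < η) :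
    Summable (ekCoeff q μ η) := by
  have hqk : Tendsto (fun k : ℕ => q ^ k) atTop (𝓝 0) :=
    tendsto_pow_atTop_nhds_zero_of_lt_one hq.le hq1
  have hratio : Tendsto (fun k : ℕ => (1 - q ^ μ * q ^ k) / (1 - q * q ^ k) * q ^ (η + 1))
      atTop (𝓝 (q ^ (η + 1))) := by
    have hnum := tendsto_const_nhds (x := (1 : ℝ)).sub (hqk.const_mul (q ^ μ))
    have hden := tendsto_const_nhds (x := (1 : ℝ)).sub (hqk.const_mul q)
    simpa using (hnum.div hden (by simp)).mul_const (q ^ (η + 1))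
  refine summable_of_ratio_test_tendsto_lt_one (Real.rpow_lt_one hq.le hq1 (by linarith))
    (.of_forall fun k => (ekCoeff_pos hq hq1 hμ k).ne') (hratio.congr fun k => ?_)
  rw [Real.norm_of_nonneg (ekCoeff_pos hq hq1 hμ _).le,
    Real.norm_of_nonneg (ekCoeff_pos hq hq1 hμ _).le, ekCoeff_succ hq hq1 hμ,
    mul_div_cancel_left₀ _ (ekCoeff_pos hq hq1 hμ k).ne']

lemma ekWeight_nonneg (hq : 0 < q) (hq1 : q < 1) (hβ : 0 < β) (hμ : 0 < μ) (k : ℕ) :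
    0 ≤ ekWeight q η μ β k := by
  have : q ^ (1 / β) < 1 := Real.rpow_lt_one hq.le hq1 (by positivity)
  have : 0 < (1 - q) ^ (μ - 1) := Real.rpow_pos_of_pos (by linarith) _
  have := ekCoeff_pos (η := η) hq hq1 hμ k
  unfold ekWeight
  positivity

lemma ekNode_mem_Icc (hq : 0 < q) (hq1 : q < 1) (hβ : 0 < β) {t : ℝ} (ht : 0 ≤ t) (k : ℕ) :
    t * q ^ ((k : ℝ) / β) ∈ Icc 0 t :=
  ⟨by positivity, mul_le_of_le_one_right ht (Real.rpow_le_one hq.le hq1.le (by positivity))⟩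

theorem hasSum_EK (hq : 0 < q) (hq1 : q < 1) (hβ : 0 < β) (hμ : 0 < μ) (hη : -1 < η)
    {t : ℝ} (ht : 0 ≤ t) {v : ℝ → ℝ} (hv : ContinuousOn v (Ici 0)) :
    HasSum (fun k : ℕ => ekWeight q η μ β k * v (t * q ^ ((k : ℝ) / β))) (EK q η μ β v t) := by
  obtain ⟨M, hM⟩ := isCompact_Icc.exists_bound_of_continuousOn (hv.mono fun _ hx => hx.1)
  have hs : Summable fun k : ℕ => ekCoeff q μ η k * v (t * q ^ ((k : ℝ) / β)) := by
    refine .of_norm_bounded ((summable_ekCoeff hq hq1 hμ hη).mul_right M) fun k => ?_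
    rw [norm_mul, Real.norm_of_nonneg (ekCoeff_pos hq hq1 hμ k).le]
    exact mul_le_mul_of_nonneg_left (hM _ (ekNode_mem_Icc hq hq1 hβ ht k))
      (ekCoeff_pos hq hq1 hμ k).le
  have := hs.hasSum.mul_left (β * (1 - q ^ (1 / β)) * (1 - q) ^ (μ - 1))
  simp only [← mul_assoc] at this
  exact this

end ErdelyiKober

theorem thm12_general
    (q₁ β μ η : ℝ)
    (hq₁ : 0 < q₁) (hq₁' : q₁ < 1)
    (hβ : 0 < β) (hμ : 0 < μ) (hη : -1 < η)
    (f g h u : ℝ → ℝ)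
    (hcf : ContinuousOn f (Set.Ici 0))
    (hcg : ContinuousOn g (Set.Ici 0))
    (hch : ContinuousOn h (Set.Ici 0))
    (hcu : ContinuousOn u (Set.Ici 0))
    (hfg : Synchronous f g)
    (hh0 : ∀ x : ℝ, 0 ≤ x → 0 ≤ h x)
    (hu0 : ∀ x : ℝ, 0 ≤ x → 0 ≤ u x)
    (t : ℝ) (ht : 0 < t) (ρ : ℝ) (hρ : 0 ≤ ρ) :
    EK q₁ η μ β (fun s => u s * f s * g s * h s) t + h ρ * EK q₁ η μ β (fun s => u s * f s * g s) t +
      f ρ * g ρ * EK q₁ η μ β (fun s => u s * h s) t + f ρ * g ρ * h ρ * EK q₁ η μ β u t ≥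
      g ρ * EK q₁ η μ β (fun s => u s * f s * h s) t + g ρ * h ρ * EK q₁ η μ β (fun s => u s * f s) t +
      f ρ * EK q₁ η μ β (fun s => u s * g s * h s) t + f ρ * h ρ * EK q₁ η μ β (fun s => u s * g s) t := by
  have H {v : ℝ → ℝ} (hv : ContinuousOn v (Ici 0)) := hasSum_EK hq₁ hq₁' hβ hμ hη ht.le hv
  rw [ge_iff_le, ← sub_nonneg]
  refine HasSum.nonneg (fun k => ?_) (((((H ?_).add ((H ?_).mul_left (h ρ))).add
    ((H ?_).mul_left (f ρ * g ρ))).add ((H hcu).mul_left (f ρ * g ρ * h ρ))).sub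
    (((((H ?_).mul_left (g ρ)).add ((H ?_).mul_left (g ρ * h ρ))).add
    ((H ?_).mul_left (f ρ))).add ((H ?_).mul_left (f ρ * h ρ))))
  · set x := t * q₁ ^ ((k : ℝ) / β)
    have hx : 0 ≤ x := (ekNode_mem_Icc hq₁ hq₁' hβ ht.le k).1
    calc 0 ≤ ekWeight q₁ η μ β k * (u x * ((f x - f ρ) * (g x - g ρ) * (h x + h ρ))) :=
          mul_nonneg (ekWeight_nonneg hq₁ hq₁' hβ hμ k) (mul_nonneg (hu0 x hx)
            (mul_nonneg (hfg x ρ hx hρ) (add_nonneg (hh0 x hx) (hh0 ρ hρ))))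
      _ = _ := by ring
  all_goals fun_prop

theorem thm12
    (q₁ β μ η : ℝ)
    (hq₁ : 0 < q₁) (hq₁' : q₁ < 1)
    (hβ : 0 < β) (hμ : 0 < μ) (hη : -1 < η)
    (f g h u : ℝ → ℝ)
    (hcf : ContinuousOn f (Set.Ici 0))
    (hcg : ContinuousOn g (Set.Ici 0))
    (hch : ContinuousOn h (Set.Ici 0))
    (hcu : ContinuousOn u (Set.Ici 0))
    (hfg : Synchronous f g) (hfh : Synchronous f h) (hgh : Synchronous g h)
    (hh0 : ∀ x : ℝ, 0 ≤ x → 0 ≤ h x)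
    (hu0 : ∀ x : ℝ, 0 ≤ x → 0 ≤ u x)
    (t : ℝ) (ht : 0 < t) (ρ : ℝ) (hρ : 0 ≤ ρ) :
    EK q₁ η μ β (fun s => u s * f s * g s * h s) t + h ρ * EK q₁ η μ β (fun s => u s * f s * g s) t +
      f ρ * g ρ * EK q₁ η μ β (fun s => u s * h s) t + f ρ * g ρ * h ρ * EK q₁ η μ β u t ≥
      g ρ * EK q₁ η μ β (fun s => u s * f s * h s) t + g ρ * h ρ * EK q₁ η μ β (fun s => u s * f s) t +
      f ρ * EK q₁ η μ β (fun s => u s * g s * h s) t + f ρ * h ρ * EK q₁ η μ β (fun s => u s * g s) t :=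
  thm12_general q₁ β μ η hq₁ hq₁' hβ hμ hη f g h u hcf hcg hch hcu hfg hh0 hu0 t ht ρ hρ
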